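/- Let X be a finite type, R ⊆ FreeGroup X, and Q := PresentedGroup R. Assume Q is Hopfian, there exists a surjective group homomorphism Q → FreeGroup (Fin 2), and centralizers of non-cyclic free subgroups of Q are trivial. Let Σ ⊆ FreeGroup X be finite nonempty with the abelianization of PresentedGroup (R ∪ Σ) a torsion group, let k ≥ 2, and let φ : W_{Σ,k} → Q^{k+1} be a surjective group homomorphism. Let H_{k1} := Subgroup.closure { y_{1σ} : σ ∈ Σ } ≤ W_{Σ,k} (the subgroup generated by the images of the generators y_{1σ}, s = 1 being the first index in Fin k). Then there exists an index m ∈ Fin (k+1) such that φ(H_{k1}) is contained in the m-th direct factor, i.e., for every h ∈ H_{k1} and every i ∈ Fin (k+1) with i ≠ m, (φ h) i = 1. (Claim 3.3 of the paper.) -/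

import Mathlib

open scoped commutatorElement

/-- The relator set of the group `W_{Σ,k}`. -/
def Wrels (X : Type) (R : Set (FreeGroup X)) (Sg : Set (FreeGroup X)) (k : ℕ) :
    Set (FreeGroup (X ⊕ (Fin k × Sg))) :=
  (FreeGroup.map Sum.inl) '' R ∪
    { w | ∃ (s : Fin k) (σ σ' : Sg),
        w = ⁅(FreeGroup.map Sum.inl (σ : FreeGroup X))⁻¹ * FreeGroup.of (Sum.inr (s, σ)),
              FreeGroup.of (Sum.inr (s, σ'))⁆ } ∪
    { w | ∃ (s t : Fin k) (σ σ' : Sg), s ≠ t ∧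
        w = ⁅(FreeGroup.of (Sum.inr (s, σ)) : FreeGroup (X ⊕ (Fin k × Sg))),
              FreeGroup.of (Sum.inr (t, σ'))⁆ }

namespace Stmt3Aux
open Subgroup

/-- Splitting of a surjection onto a free group. -/
lemma exists_section {G F : Type*} [Group G] [Group F] [IsFreeGroup F]
    (ψ : G →* F) (hψ : Function.Surjective ψ) :
    ∃ s : F →* G, ψ.comp s = MonoidHom.id F := by
  refine ⟨IsFreeGroup.lift (fun i => Classical.choose (hψ (IsFreeGroup.of i))), ?_⟩
  apply IsFreeGroup.ext_hom
  intro a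
  simp only [MonoidHom.comp_apply, MonoidHom.id_apply, IsFreeGroup.lift_of]
  exact Classical.choose_spec (hψ (IsFreeGroup.of a))

/-- In the presence of the centralizer hypothesis, θ-images of centralizers are cyclic. -/
lemma theta_centralizer_cyclic {Q : Type*} [Group Q]
    (hcent : ∀ H : Subgroup Q, IsFreeGroup H → ¬ IsCyclic H →
      Subgroup.centralizer (H : Set Q) = ⊥)
    (θ : Q →* FreeGroup (Fin 2)) (x : Q) (hx : x ≠ 1) :
    ∃ z : FreeGroup (Fin 2), ∀ y : Q, Commute y x → θ y ∈ Subgroup.zpowers z := by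
  classical
  set C : Subgroup Q := Subgroup.centralizer {x} with hC
  set M : Subgroup (FreeGroup (Fin 2)) := C.map θ with hM
  by_cases hcy : IsCyclic M
  · obtain ⟨g, hg⟩ := IsCyclic.exists_generator (α := M)
    refine ⟨(g : FreeGroup (Fin 2)), fun y hy => ?_⟩
    have hyC : y ∈ C := by
      rw [hC, Subgroup.mem_centralizer_iff]
      intro h hh
      rw [Set.mem_singleton_iff] at hh
      subst hh
      exact hy.symm.eq
    have : θ y ∈ M := ⟨y, hyC, rfl⟩
    obtain ⟨n, hn⟩ := Subgroup.mem_zpowers_iff.mp (hg ⟨θ y, this⟩)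
    refine Subgroup.mem_zpowers_iff.mpr ⟨n, ?_⟩
    have := congrArg (Subgroup.subtype M) hn
    simpa using this
  · exfalso
    have hψs : Function.Surjective (θ.subgroupMap C) := θ.subgroupMap_surjective C
    obtain ⟨s, hs⟩ := exists_section (θ.subgroupMap C) hψs
    have hsinj : Function.Injective s := by
      intro a b hab
      have := congrArg (θ.subgroupMap C) hab
      have h2 : (θ.subgroupMap C).comp s a = (θ.subgroupMap C).comp s b := this
      rwa [hs, MonoidHom.id_apply, MonoidHom.id_apply] at h2
    set j : M →* Q := C.subtype.comp s with hj
    have hjinj : Function.Injective j := by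
      intro a b hab
      exact hsinj (Subtype.ext hab)
    set H : Subgroup Q := j.range with hH
    have e : M ≃* H := MonoidHom.ofInjective hjinj
    haveI : IsFreeGroup H := IsFreeGroup.ofMulEquiv e
    have hHnc : ¬ IsCyclic H := by
      intro h
      exact hcy (isCyclic_of_surjective e.symm e.symm.surjective)
    have hbot := hcent H inferInstance hHnc
    have hxmem : x ∈ Subgroup.centralizer (H : Set Q) := by
      rw [Subgroup.mem_centralizer_iff]
      rintro h ⟨mval, rfl⟩
      have : (j mval : Q) ∈ C := (s mval).2
      rw [hC, Subgroup.mem_centralizer_iff] at this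
      exact (this x rfl).symm
    rw [hbot] at hxmem
    exact hx hxmem

noncomputable def beta : FreeGroup (Fin 2) →* Multiplicative (ℤ × ℤ) :=
  FreeGroup.lift (fun b => Multiplicative.ofAdd (if b = 0 then ((1:ℤ),(0:ℤ)) else ((0:ℤ),(1:ℤ))))

lemma beta_surjective : Function.Surjective beta := by
  intro v
  refine ⟨(FreeGroup.of 0) ^ (Multiplicative.toAdd v).1 * (FreeGroup.of 1) ^ (Multiplicative.toAdd v).2, ?_⟩
  rw [map_mul, map_zpow, map_zpow]
  simp only [beta, FreeGroup.lift_apply_of, if_pos rfl, if_neg (by decide : ¬(1:Fin 2) = 0)]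
  apply Multiplicative.toAdd.injective
  rw [toAdd_mul, toAdd_zpow, toAdd_zpow, toAdd_ofAdd, toAdd_ofAdd]
  ext <;> simp


/-- The core "Claim (†)" at one coordinate. -/
lemma core_claim {Q : Type*} [Group Q]
    (hcent : ∀ H : Subgroup Q, IsFreeGroup H → ¬ IsCyclic H →
      Subgroup.centralizer (H : Set Q) = ⊥)
    (θ : Q →* FreeGroup (Fin 2)) (hθ : Function.Surjective θ)
    {T I : Type*} (t₀ : T) [DecidableEq T]
    (q : Q →* Q) (a : I → Q) (w : T → I → Q)
    (h1 : ∀ σ σ', Commute ((a σ)⁻¹ * w t₀ σ) (w t₀ σ'))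
    (h2 : ∀ t, t ≠ t₀ → ∀ σ σ', Commute (w t σ) (w t₀ σ'))
    (h3 : Subgroup.closure (Set.range ⇑q ∪ Set.range (fun p : T × I => w p.1 p.2)) = ⊤)
    (h4 : ∀ x : Q, ∃ n : ℕ, 0 < n ∧
      (beta (θ (q x)))^n ∈ Subgroup.closure (Set.range fun σ : I => beta (θ (a σ))))
    (hne : ∃ σ₀, w t₀ σ₀ ≠ 1) :
    Subgroup.centralizer (Set.range (w t₀)) = ⊥ := by
  classical
  rw [Subgroup.eq_bot_iff_forall]
  intro c hc
  by_contra hcne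
  obtain ⟨σ₀, hσ₀⟩ := hne
  -- the commutation data
  have hcw : ∀ σ, Commute (w t₀ σ) c := by
    intro σ
    rw [Subgroup.mem_centralizer_iff] at hc
    exact hc (w t₀ σ) ⟨σ, rfl⟩
  have key : ∃ (z z' : FreeGroup (Fin 2)) (m : Multiplicative (ℤ × ℤ)) (p r : ℤ),
      p ≠ 0 ∧ r ≠ 0 ∧ (beta z')^p = m ∧ (beta z)^r = m ∧
      (∀ σ, θ (w t₀ σ) ∈ Subgroup.zpowers z') ∧
      (∀ t, t ≠ t₀ → ∀ σ, θ (w t σ) ∈ Subgroup.zpowers z) ∧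
      (∀ σ, θ ((a σ)⁻¹ * w t₀ σ) ∈ Subgroup.zpowers z) := by
    by_cases hA : ∃ σ, θ (w t₀ σ) ≠ 1
    · obtain ⟨σs, hσs⟩ := hA
      have hws1 : w t₀ σs ≠ 1 := fun h => hσs (by rw [h, map_one])
      obtain ⟨z, hz⟩ := theta_centralizer_cyclic hcent θ (w t₀ σs) hws1
      obtain ⟨z', hz'⟩ := theta_centralizer_cyclic hcent θ c hcne
      have hws_z' : θ (w t₀ σs) ∈ Subgroup.zpowers z' := hz' _ (hcw σs)
      have hws_z : θ (w t₀ σs) ∈ Subgroup.zpowers z := hz _ (Commute.refl _)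
      obtain ⟨p, hp⟩ := Subgroup.mem_zpowers_iff.mp hws_z'
      obtain ⟨r, hr⟩ := Subgroup.mem_zpowers_iff.mp hws_z
      have hp0 : p ≠ 0 := by rintro rfl; rw [zpow_zero] at hp; exact hσs hp.symm
      have hr0 : r ≠ 0 := by rintro rfl; rw [zpow_zero] at hr; exact hσs hr.symm
      refine ⟨z, z', beta (θ (w t₀ σs)), p, r, hp0, hr0, ?_, ?_, fun σ => hz' _ (hcw σ),
        fun t ht σ => hz _ (h2 t ht σ σs), fun σ => hz _ (h1 σ σs)⟩
      · rw [← map_zpow, hp]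
      · rw [← map_zpow, hr]
    · push_neg at hA
      have hws1 : w t₀ σ₀ ≠ 1 := hσ₀
      obtain ⟨z, hz⟩ := theta_centralizer_cyclic hcent θ (w t₀ σ₀) hws1
      refine ⟨z, z, beta z, 1, 1, one_ne_zero, one_ne_zero, zpow_one _, zpow_one _,
        fun σ => by rw [hA σ]; exact Subgroup.one_mem _,
        fun t ht σ => hz _ (h2 t ht σ σ₀), fun σ => hz _ (h1 σ σ₀)⟩
  obtain ⟨z, z', m, p, r, hp0, hr0, hzp, hzr, hθ0, hθt, hθc⟩ := key
  -- the subgroup of elements with a nonzero power in the cyclic group generated by m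
  set Tsub : Subgroup (Multiplicative (ℤ × ℤ)) :=
    { carrier := {v | ∃ N : ℤ, N ≠ 0 ∧ v ^ N ∈ Subgroup.zpowers m}
      one_mem' := ⟨1, one_ne_zero, by rw [one_zpow]; exact Subgroup.one_mem _⟩
      mul_mem' := by
        rintro x y ⟨N, hN, hxN⟩ ⟨M, hM, hyM⟩
        refine ⟨N * M, mul_ne_zero hN hM, ?_⟩
        rw [mul_zpow, zpow_mul, mul_comm N M, zpow_mul]
        exact Subgroup.mul_mem _ (Subgroup.zpow_mem _ hxN M) (Subgroup.zpow_mem _ hyM N)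
      inv_mem' := by
        rintro x ⟨N, hN, hxN⟩
        exact ⟨N, hN, by rw [inv_zpow]; exact Subgroup.inv_mem _ hxN⟩ } with hTsub
  -- saturation
  have hsat : ∀ (v : Multiplicative (ℤ × ℤ)) (n : ℕ), 0 < n → v ^ n ∈ Tsub → v ∈ Tsub := by
    rintro v n hn ⟨N, hN, hvN⟩
    refine ⟨(n : ℤ) * N, mul_ne_zero (Int.natCast_ne_zero.mpr hn.ne') hN, ?_⟩
    rw [zpow_mul, zpow_natCast]
    exact hvN
  have hzmem : beta z ∈ Tsub := ⟨r, hr0, by rw [hzr]; exact Subgroup.mem_zpowers m⟩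
  have hz'mem : beta z' ∈ Tsub := ⟨p, hp0, by rw [hzp]; exact Subgroup.mem_zpowers m⟩
  have hzle : Subgroup.zpowers (beta z) ≤ Tsub := (Subgroup.zpowers_le).mpr hzmem
  have hz'le : Subgroup.zpowers (beta z') ≤ Tsub := (Subgroup.zpowers_le).mpr hz'mem
  have hbmem : ∀ {y : FreeGroup (Fin 2)} {u : FreeGroup (Fin 2)},
      y ∈ Subgroup.zpowers u → beta y ∈ Subgroup.zpowers (beta u) := by
    rintro y u hy
    obtain ⟨n, rfl⟩ := Subgroup.mem_zpowers_iff.mp hy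
    exact Subgroup.mem_zpowers_iff.mpr ⟨n, by rw [map_zpow]⟩
  -- the J subgroup is inside Tsub
  have hJle : Subgroup.closure (Set.range fun σ : I => beta (θ (a σ))) ≤ Tsub := by
    rw [Subgroup.closure_le]
    rintro _ ⟨σ, rfl⟩
    show beta (θ (a σ)) ∈ Tsub
    have hadecomp : a σ = (w t₀ σ) * ((a σ)⁻¹ * w t₀ σ)⁻¹ := by group
    have : beta (θ (a σ)) = beta (θ (w t₀ σ)) * (beta (θ ((a σ)⁻¹ * w t₀ σ)))⁻¹ := by
      rw [← map_inv, ← map_inv, ← map_mul, ← map_mul, ← hadecomp]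
    rw [this]
    exact Subgroup.mul_mem _ (hz'le (hbmem (hθ0 σ)))
      (Subgroup.inv_mem _ (hzle (hbmem (hθc σ))))
  -- all of ℤ² is in Tsub
  have hTtop : ∀ v : Multiplicative (ℤ × ℤ), v ∈ Tsub := by
    have hsurj : Function.Surjective (beta.comp θ) := beta_surjective.comp hθ
    have htop' : Subgroup.closure ((beta.comp θ) ''
        (Set.range ⇑q ∪ Set.range (fun p : T × I => w p.1 p.2))) = ⊤ := by
      rw [← MonoidHom.map_closure, h3, ← MonoidHom.range_eq_map,
        MonoidHom.range_eq_top.mpr hsurj]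
    intro v
    have : v ∈ Subgroup.closure ((beta.comp θ) ''
        (Set.range ⇑q ∪ Set.range (fun p : T × I => w p.1 p.2))) := by
      rw [htop']; trivial
    refine (Subgroup.closure_le Tsub).mpr ?_ this
    rintro _ ⟨x, hx, rfl⟩
    show (beta.comp θ) x ∈ Tsub
    rcases hx with ⟨x₀, rfl⟩ | ⟨⟨t, σ⟩, rfl⟩
    · obtain ⟨n, hn, hmem⟩ := h4 x₀
      exact hsat _ n hn (by rw [← map_pow]; exact hJle (by rw [map_pow]; exact hmem))
    · simp only [MonoidHom.comp_apply]
      by_cases ht : t = t₀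
      · subst ht; exact hz'le (hbmem (hθ0 σ))
      · exact hzle (hbmem (hθt t ht σ))
  -- contradiction in ℤ²
  obtain ⟨N1, hN1, hm1⟩ := hTtop (Multiplicative.ofAdd ((1:ℤ),(0:ℤ)))
  obtain ⟨N2, hN2, hm2⟩ := hTtop (Multiplicative.ofAdd ((0:ℤ),(1:ℤ)))
  obtain ⟨K, hK⟩ := Subgroup.mem_zpowers_iff.mp hm1
  obtain ⟨L, hL⟩ := Subgroup.mem_zpowers_iff.mp hm2
  have hK' := congrArg Multiplicative.toAdd hK
  have hL' := congrArg Multiplicative.toAdd hL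
  rw [toAdd_zpow, toAdd_zpow, toAdd_ofAdd] at hK' hL'
  have hK1 : K * (Multiplicative.toAdd m).1 = N1 := by
    have := congrArg Prod.fst hK'
    simpa [smul_eq_mul] using this
  have hK2 : K * (Multiplicative.toAdd m).2 = 0 := by
    have := congrArg Prod.snd hK'
    simpa [smul_eq_mul] using this
  have hL2 : L * (Multiplicative.toAdd m).2 = N2 := by
    have := congrArg Prod.snd hL'
    simpa [smul_eq_mul] using this
  have hKne : K ≠ 0 := by
    rintro rfl; rw [zero_mul] at hK1; exact hN1 hK1.symm
  have hm2z : (Multiplicative.toAdd m).2 = 0 := by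
    rcases mul_eq_zero.mp hK2 with h | h
    · exact absurd h hKne
    · exact h
  rw [hm2z, mul_zero] at hL2
  exact hN2 hL2.symm



lemma mk_rel_eq_one {α : Type*} {rels : Set (FreeGroup α)} {r : FreeGroup α} (h : r ∈ rels) :
    PresentedGroup.mk rels r = 1 :=
  (QuotientGroup.eq_one_iff r).mpr (Subgroup.subset_normalClosure h)

variable {X : Type} (R : Set (FreeGroup X)) (Sg : Set (FreeGroup X)) (k : ℕ)

/-- the coordinate maps of φ -/
def coord (φ : PresentedGroup (Wrels X R Sg k) →* (Fin (k + 1) → PresentedGroup R))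
    (i : Fin (k + 1)) : PresentedGroup (Wrels X R Sg k) →* PresentedGroup R :=
  (Pi.evalMonoidHom (fun _ => PresentedGroup R) i).comp φ

variable (φ : PresentedGroup (Wrels X R Sg k) →* (Fin (k + 1) → PresentedGroup R))

lemma coord_surj (hφ : Function.Surjective φ) (i : Fin (k + 1)) :
    Function.Surjective (coord R Sg k φ i) := by
  intro y
  obtain ⟨g, hg⟩ := hφ (fun l => if l = i then y else 1)
  exact ⟨g, by simp [coord, hg]⟩

lemma lift_comp_inl {G : Type*} [Group G] (f : X ⊕ (Fin k × Sg) → G) :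
    (FreeGroup.lift f).comp (FreeGroup.map Sum.inl) =
      FreeGroup.lift (fun x => f (Sum.inl x)) := by
  apply FreeGroup.ext_hom
  intro a
  simp [FreeGroup.map.of]

lemma qi_aux (i : Fin (k + 1)) :
    ∀ r ∈ R, FreeGroup.lift (fun x => coord R Sg k φ i (PresentedGroup.of (Sum.inl x))) r = 1 := by
  intro r hr
  have h1 : FreeGroup.lift (fun x => coord R Sg k φ i (PresentedGroup.of (Sum.inl x))) =
      ((coord R Sg k φ i).comp (PresentedGroup.mk (Wrels X R Sg k))).comp
        (FreeGroup.map Sum.inl) := by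
    apply FreeGroup.ext_hom
    intro a
    simp only [MonoidHom.comp_apply, FreeGroup.lift_apply_of, FreeGroup.map.of]
    rfl
  rw [h1]
  simp only [MonoidHom.comp_apply]
  rw [mk_rel_eq_one (Or.inl (Or.inl ⟨r, hr, rfl⟩)), map_one]

/-- the induced endomorphism of Q at coordinate i -/
def qi (i : Fin (k + 1)) : PresentedGroup R →* PresentedGroup R :=
  PresentedGroup.toGroup (qi_aux R Sg k φ i)

lemma qi_of (i : Fin (k + 1)) (x : X) :
    qi R Sg k φ i (PresentedGroup.of x) = coord R Sg k φ i (PresentedGroup.of (Sum.inl x)) :=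
  PresentedGroup.toGroup.of _

lemma qi_spec (i : Fin (k + 1)) (u : FreeGroup X) :
    qi R Sg k φ i (PresentedGroup.mk R u) =
      coord R Sg k φ i (PresentedGroup.mk (Wrels X R Sg k) (FreeGroup.map Sum.inl u)) := by
  have h1 : (qi R Sg k φ i).comp (PresentedGroup.mk R) =
      ((coord R Sg k φ i).comp (PresentedGroup.mk (Wrels X R Sg k))).comp
        (FreeGroup.map Sum.inl) := by
    apply FreeGroup.ext_hom
    intro a
    simp only [MonoidHom.comp_apply, FreeGroup.map.of]
    exact qi_of R Sg k φ i a
  exact congrFun (congrArg (fun (h : FreeGroup X →* PresentedGroup R) => ⇑h) h1) u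

/-- the generators y_{sσ} -/
def yg (t : Fin k) (σ : Sg) : PresentedGroup (Wrels X R Sg k) :=
  PresentedGroup.of (Sum.inr (t, σ))

lemma rel2 (i : Fin (k + 1)) (s : Fin k) (σ σ' : Sg) :
    Commute ((qi R Sg k φ i (PresentedGroup.mk R ↑σ))⁻¹ * coord R Sg k φ i (yg R Sg k s σ))
      (coord R Sg k φ i (yg R Sg k s σ')) := by
  rw [← commutatorElement_eq_one_iff_commute]
  have h0 : PresentedGroup.mk (Wrels X R Sg k)
      ⁅(FreeGroup.map Sum.inl (σ : FreeGroup X))⁻¹ * FreeGroup.of (Sum.inr (s, σ)),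
        FreeGroup.of (Sum.inr (s, σ'))⁆ = 1 :=
    mk_rel_eq_one (Or.inl (Or.inr ⟨s, σ, σ', rfl⟩))
  rw [map_commutatorElement, map_mul, map_inv] at h0
  have h1 := congrArg (coord R Sg k φ i) h0
  rw [map_one, map_commutatorElement, map_mul, map_inv] at h1
  rw [qi_spec]
  exact h1

lemma rel3 (i : Fin (k + 1)) (s t : Fin k) (hst : s ≠ t) (σ σ' : Sg) :
    Commute (coord R Sg k φ i (yg R Sg k s σ)) (coord R Sg k φ i (yg R Sg k t σ')) := by
  rw [← commutatorElement_eq_one_iff_commute]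
  have h0 : PresentedGroup.mk (Wrels X R Sg k)
      ⁅(FreeGroup.of (Sum.inr (s, σ)) : FreeGroup (X ⊕ (Fin k × Sg))),
        FreeGroup.of (Sum.inr (t, σ'))⁆ = 1 :=
    mk_rel_eq_one (Or.inr ⟨s, t, σ, σ', hst, rfl⟩)
  rw [map_commutatorElement] at h0
  have h1 := congrArg (coord R Sg k φ i) h0
  rw [map_one, map_commutatorElement] at h1
  exact h1

lemma generation (hφ : Function.Surjective φ) (i : Fin (k + 1)) :
    Subgroup.closure (Set.range ⇑(qi R Sg k φ i) ∪
      Set.range (fun p : Fin k × Sg => coord R Sg k φ i (yg R Sg k p.1 p.2))) = ⊤ := by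
  rw [eq_top_iff]
  intro x _
  set H := Subgroup.closure (Set.range ⇑(qi R Sg k φ i) ∪
    Set.range (fun p : Fin k × Sg => coord R Sg k φ i (yg R Sg k p.1 p.2)))
  obtain ⟨g, rfl⟩ := coord_surj R Sg k φ hφ i x
  have : g ∈ H.comap (coord R Sg k φ i) := by
    apply PresentedGroup.generated_by
    intro j
    rcases j with x₀ | ⟨t, σ⟩
    · apply Subgroup.mem_comap.mpr
      apply Subgroup.subset_closure
      exact Or.inl ⟨PresentedGroup.of x₀, (qi_of R Sg k φ i x₀)⟩
    · apply Subgroup.mem_comap.mpr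
      apply Subgroup.subset_closure
      exact Or.inr ⟨(t, σ), rfl⟩
  exact this

lemma torsion_lemma (θ : PresentedGroup R →* FreeGroup (Fin 2))
    (htors : Monoid.IsTorsion (Abelianization (PresentedGroup (R ∪ Sg))))
    (i : Fin (k + 1)) (x : PresentedGroup R) :
    ∃ n : ℕ, 0 < n ∧ (beta (θ (qi R Sg k φ i x)))^n ∈
      Subgroup.closure (Set.range fun σ : Sg =>
        beta (θ (qi R Sg k φ i (PresentedGroup.mk R ↑σ)))) := by
  classical
  set J := Subgroup.closure (Set.range fun σ : Sg =>
    beta (θ (qi R Sg k φ i (PresentedGroup.mk R ↑σ)))) with hJ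
  set f : X → Multiplicative (ℤ × ℤ) ⧸ J := fun x =>
    QuotientGroup.mk' J (beta (θ (qi R Sg k φ i (PresentedGroup.of x)))) with hf
  have hcomp : FreeGroup.lift f = (QuotientGroup.mk' J).comp
      (beta.comp (θ.comp ((qi R Sg k φ i).comp (PresentedGroup.mk R)))) := by
    apply FreeGroup.ext_hom
    intro a
    simp only [MonoidHom.comp_apply, FreeGroup.lift_apply_of, hf]
    rfl
  have hrels : ∀ r ∈ R ∪ Sg, FreeGroup.lift f r = 1 := by
    intro r hr
    rw [hcomp]
    simp only [MonoidHom.comp_apply]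
    rcases hr with hr | hr
    · rw [mk_rel_eq_one hr]
      simp
    · apply (QuotientGroup.eq_one_iff _).mpr
      exact Subgroup.subset_closure ⟨(⟨r, hr⟩ : Sg), rfl⟩
  set g : PresentedGroup (R ∪ Sg) →* Multiplicative (ℤ × ℤ) ⧸ J :=
    PresentedGroup.toGroup hrels with hg
  obtain ⟨u, rfl⟩ := PresentedGroup.mk_surjective R x
  set q0 : PresentedGroup (R ∪ Sg) := PresentedGroup.mk (R ∪ Sg) u with hq0
  have hfin : IsOfFinOrder (Abelianization.of q0) := htors _
  refine ⟨orderOf (Abelianization.of q0), hfin.orderOf_pos, ?_⟩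
  have hpow : (Abelianization.of q0) ^ orderOf (Abelianization.of q0) = 1 :=
    pow_orderOf_eq_one _
  have h2 := congrArg (Abelianization.lift g) hpow
  rw [map_pow, map_one, Abelianization.lift_apply_of] at h2
  have hgq : g q0 = QuotientGroup.mk' J (beta (θ (qi R Sg k φ i (PresentedGroup.mk R u)))) := by
    have : g q0 = FreeGroup.lift f u := rfl
    rw [this, hcomp]
    rfl
  rw [hgq] at h2
  rw [← map_pow] at h2
  exact (QuotientGroup.eq_one_iff _).mp h2

/-- generator values for the retraction ρ -/
def rhoFun (t₀ : Fin k) : X ⊕ (Fin k × Sg) → PresentedGroup R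
  | Sum.inl x => PresentedGroup.of x
  | Sum.inr p => if p.1 = t₀ then PresentedGroup.mk R ↑p.2 else 1

/-- the retraction-like homomorphism ρ : W → Q (y_{t₀σ} ↦ σ, other y ↦ 1) -/
noncomputable def rho (t₀ : Fin k) : PresentedGroup (Wrels X R Sg k) →* PresentedGroup R := by
  classical
  refine PresentedGroup.toGroup (f := rhoFun R Sg k t₀) ?_
  have hcomp : (FreeGroup.lift (rhoFun R Sg k t₀)).comp
      (FreeGroup.map Sum.inl) = PresentedGroup.mk R := by
    apply FreeGroup.ext_hom
    intro a
    simp only [MonoidHom.comp_apply, FreeGroup.map.of, FreeGroup.lift_apply_of]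
    rfl
  have hval : ∀ (t : Fin k) (σ : Sg), rhoFun R Sg k t₀ (Sum.inr (t, σ)) =
      (if t = t₀ then PresentedGroup.mk R ↑σ else 1) := fun t σ => rfl
  rintro r ((⟨r₀, hr₀, rfl⟩ | ⟨s, σ, σ', rfl⟩) | ⟨s, t, σ, σ', hst, rfl⟩)
  · have := congrFun (congrArg (fun (h : FreeGroup X →* PresentedGroup R) => ⇑h) hcomp) r₀
    simp only [MonoidHom.comp_apply] at this
    rw [this]
    exact mk_rel_eq_one hr₀
  · rw [map_commutatorElement, map_mul, map_inv]
    have h1 : FreeGroup.lift _ ((FreeGroup.map Sum.inl) (σ : FreeGroup X)) = PresentedGroup.mk R ↑σ :=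
      congrFun (congrArg (fun (h : FreeGroup X →* PresentedGroup R) => ⇑h) hcomp) (σ : FreeGroup X)
    rw [FreeGroup.lift_apply_of, FreeGroup.lift_apply_of, h1, hval, hval]
    by_cases hs : s = t₀
    · subst hs
      simp only [if_pos rfl, if_true]
      rw [inv_mul_cancel]
      exact commutatorElement_one_left _
    · simp only [if_neg hs]
      exact commutatorElement_one_right _
  · rw [map_commutatorElement, FreeGroup.lift_apply_of, FreeGroup.lift_apply_of, hval, hval]
    by_cases hs : s = t₀
    · have ht : ¬ t = t₀ := fun h => hst (by rw [hs, h])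
      simp only [if_neg ht]
      exact commutatorElement_one_right _
    · simp only [if_neg hs]
      exact commutatorElement_one_left _

lemma rho_of_inl (t₀ : Fin k) (x : X) :
    rho R Sg k t₀ (PresentedGroup.of (Sum.inl x)) = PresentedGroup.of x :=
  PresentedGroup.toGroup.of _

lemma rho_of_inr (t₀ : Fin k) (t : Fin k) (σ : Sg) :
    rho R Sg k t₀ (PresentedGroup.of (Sum.inr (t, σ))) =
      (if t = t₀ then PresentedGroup.mk R ↑σ else 1) :=
  PresentedGroup.toGroup.of _


lemma f2_of_ne_one : (FreeGroup.of (0 : Fin 2)) ≠ 1 := by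
  intro h
  have := congrArg beta h
  rw [map_one] at this
  simp only [beta, FreeGroup.lift_apply_of, if_pos rfl] at this
  have h2 := congrArg Multiplicative.toAdd this
  rw [toAdd_ofAdd, toAdd_one] at h2
  exact one_ne_zero (congrArg Prod.fst h2)

end Stmt3Aux

/-- A group is Hopfian if every surjective endomorphism is injective. -/
def IsHopfian (G : Type*) [Group G] : Prop :=
  ∀ φ : G →* G, Function.Surjective φ → Function.Injective φ

open Stmt3Aux in
/-- Claim 3.3: with `Q`, `R`, `Σ` as in Lemma 3.1, `k ≥ 2` and `φ : W_{Σ,k} → Q^{k+1}` a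
surjection, the image `φ(H_{k1})` of the subgroup generated by the `y_{1σ}` lies in a
single direct factor of `Q^{k+1}`. -/
theorem stmt3 (X : Type) [Finite X] (R : Set (FreeGroup X))
    (hHopf : IsHopfian (PresentedGroup R))
    (hF2 : ∃ θ : PresentedGroup R →* FreeGroup (Fin 2), Function.Surjective θ)
    (hcent : ∀ H : Subgroup (PresentedGroup R), IsFreeGroup H → ¬ IsCyclic H →
      Subgroup.centralizer (H : Set (PresentedGroup R)) = ⊥)
    (Sg : Set (FreeGroup X)) (hSfin : Sg.Finite) (hSne : Sg.Nonempty)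
    (htors : Monoid.IsTorsion (Abelianization (PresentedGroup (R ∪ Sg))))
    (k : ℕ) (hk : 2 ≤ k)
    (φ : PresentedGroup (Wrels X R Sg k) →* (Fin (k + 1) → PresentedGroup R))
    (hφ : Function.Surjective φ) :
    ∃ m : Fin (k + 1),
      ∀ h ∈ Subgroup.closure
          { w : PresentedGroup (Wrels X R Sg k) | ∃ σ : Sg,
              w = PresentedGroup.of (Sum.inr ((⟨0, by omega⟩ : Fin k), σ)) },
        ∀ i : Fin (k + 1), i ≠ m → φ h i = 1 := by
  classical
  obtain ⟨θ, hθ⟩ := hF2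
  have hk0 : 0 < k := by omega
  set t₀ : Fin k := ⟨0, hk0⟩ with ht₀
  set P : Fin (k + 1) → Prop :=
    fun i => ∀ σ : Sg, coord R Sg k φ i (yg R Sg k t₀ σ) = 1 with hP
  -- the main pairwise exclusion
  have hpair : ∀ i j : Fin (k + 1), i ≠ j → ¬ P i → ¬ P j → False := by
    intro i j hij hPi hPj
    rw [hP] at hPi hPj
    simp only [not_forall] at hPi hPj
    -- nontrivial centralizer claim, coordinatewise
    have Cbot : ∀ l : Fin (k + 1), (∃ σ : Sg, coord R Sg k φ l (yg R Sg k t₀ σ) ≠ 1) →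
        Subgroup.centralizer (Set.range (fun σ : Sg => coord R Sg k φ l (yg R Sg k t₀ σ))) = ⊥ := by
      intro l hl
      exact core_claim hcent θ hθ t₀ (qi R Sg k φ l)
        (fun σ : Sg => qi R Sg k φ l (PresentedGroup.mk R ↑σ))
        (fun t σ => coord R Sg k φ l (yg R Sg k t σ))
        (fun σ σ' => rel2 R Sg k φ l t₀ σ σ')
        (fun t ht σ σ' => rel3 R Sg k φ l t t₀ ht σ σ')
        (generation R Sg k φ hφ l)
        (fun x => torsion_lemma R Sg k φ θ htors l x)
        hl
    have hmemC : ∀ (l : Fin (k + 1)) (c : PresentedGroup R),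
        (∀ σ' : Sg, Commute c (coord R Sg k φ l (yg R Sg k t₀ σ'))) →
        c ∈ Subgroup.centralizer
          (Set.range (fun σ : Sg => coord R Sg k φ l (yg R Sg k t₀ σ))) := by
      intro l c hc
      rw [Subgroup.mem_centralizer_iff]
      rintro _ ⟨σ', rfl⟩
      exact ((hc σ').symm).eq
    have hwa : ∀ l : Fin (k + 1),
        Subgroup.centralizer (Set.range (fun σ : Sg => coord R Sg k φ l (yg R Sg k t₀ σ))) = ⊥ →
        ∀ σ : Sg, coord R Sg k φ l (yg R Sg k t₀ σ) = qi R Sg k φ l (PresentedGroup.mk R ↑σ) := by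
      intro l hC σ
      have hc := hmemC l _ (fun σ' => rel2 R Sg k φ l t₀ σ σ')
      rw [hC, Subgroup.mem_bot] at hc
      exact (inv_mul_eq_one.mp hc).symm
    have hwt : ∀ l : Fin (k + 1),
        Subgroup.centralizer (Set.range (fun σ : Sg => coord R Sg k φ l (yg R Sg k t₀ σ))) = ⊥ →
        ∀ t : Fin k, t ≠ t₀ → ∀ σ : Sg, coord R Sg k φ l (yg R Sg k t σ) = 1 := by
      intro l hC t ht σ
      have hc := hmemC l _ (fun σ' => rel3 R Sg k φ l t t₀ ht σ σ')
      rw [hC, Subgroup.mem_bot] at hc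
      exact hc
    have hsurj : ∀ l : Fin (k + 1),
        Subgroup.centralizer (Set.range (fun σ : Sg => coord R Sg k φ l (yg R Sg k t₀ σ))) = ⊥ →
        Function.Surjective (qi R Sg k φ l) := by
      intro l hC
      apply MonoidHom.range_eq_top.mp
      apply eq_top_iff.mpr
      rw [← generation R Sg k φ hφ l]
      apply (Subgroup.closure_le _).mpr
      rintro x (⟨x₀, rfl⟩ | ⟨⟨t, σ⟩, rfl⟩)
      · exact ⟨x₀, rfl⟩
      · show coord R Sg k φ l (yg R Sg k t σ) ∈ ((qi R Sg k φ l).range : Set _)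
        by_cases ht : t = t₀
        · subst ht
          rw [hwa l hC σ]
          exact ⟨PresentedGroup.mk R ↑σ, rfl⟩
        · rw [hwt l hC t ht σ]
          exact Subgroup.one_mem _
    have hfac : ∀ l : Fin (k + 1),
        Subgroup.centralizer (Set.range (fun σ : Sg => coord R Sg k φ l (yg R Sg k t₀ σ))) = ⊥ →
        coord R Sg k φ l = (qi R Sg k φ l).comp (rho R Sg k t₀) := by
      intro l hC
      apply PresentedGroup.ext
      rintro (x | ⟨t, σ⟩)
      · simp only [MonoidHom.comp_apply]
        rw [rho_of_inl]
        exact (qi_of R Sg k φ l x).symm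
      · simp only [MonoidHom.comp_apply]
        rw [rho_of_inr]
        by_cases ht : t = t₀
        · subst ht
          rw [if_pos rfl]
          exact hwa l hC σ
        · rw [if_neg ht, map_one]
          exact hwt l hC t ht σ
    have Ci := Cbot i hPi
    have Cj := Cbot j hPj
    -- a nontrivial element of Q
    obtain ⟨y0, hy0⟩ := hθ (FreeGroup.of 0)
    have hy0ne : y0 ≠ 1 := by
      intro h
      rw [h, map_one] at hy0
      exact f2_of_ne_one hy0.symm
    obtain ⟨g, hg⟩ := hφ (fun l => if l = i then y0 else 1)
    have h1 : coord R Sg k φ i g = y0 := by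
      simp [coord, hg]
    have h2 : coord R Sg k φ j g = 1 := by
      simp [coord, hg, show ¬ j = i from fun h => hij h.symm]
    have h3 : rho R Sg k t₀ g = 1 := by
      apply hHopf (qi R Sg k φ j) (hsurj j Cj)
      rw [map_one]
      have := congrFun (congrArg (fun (h : PresentedGroup (Wrels X R Sg k) →* PresentedGroup R)
        => ⇑h) (hfac j Cj)) g
      simp only [MonoidHom.comp_apply] at this
      rw [← this]
      exact h2
    have h4 : y0 = 1 := by
      have := congrFun (congrArg (fun (h : PresentedGroup (Wrels X R Sg k) →* PresentedGroup R)
        => ⇑h) (hfac i Ci)) g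
      simp only [MonoidHom.comp_apply] at this
      rw [← h1, this, h3, map_one]
    exact hy0ne h4
  -- conclude
  have hker : ∀ i : Fin (k + 1), P i →
      ∀ h ∈ Subgroup.closure
        { w : PresentedGroup (Wrels X R Sg k) | ∃ σ : Sg,
            w = PresentedGroup.of (Sum.inr ((⟨0, by omega⟩ : Fin k), σ)) },
      φ h i = 1 := by
    intro i hPi h hh
    have hle : Subgroup.closure
        { w : PresentedGroup (Wrels X R Sg k) | ∃ σ : Sg,
            w = PresentedGroup.of (Sum.inr ((⟨0, by omega⟩ : Fin k), σ)) } ≤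
        (coord R Sg k φ i).ker := by
      apply (Subgroup.closure_le _).mpr
      rintro _ ⟨σ, rfl⟩
      exact MonoidHom.mem_ker.mpr (hPi σ)
    exact MonoidHom.mem_ker.mp (hle hh)
  by_cases hex : ∃ i, ¬ P i
  · obtain ⟨m, hm⟩ := hex
    refine ⟨m, fun h hh i him => ?_⟩
    have hPi : P i := by
      by_contra hPi
      exact hpair i m him hPi hm
    exact hker i hPi h hh
  · push_neg at hex
    exact ⟨0, fun h hh i _ => hker i (hex i) h hh⟩
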